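/- Let χ be a fixed smooth function on ℝ with χ(s) = 1 for |s| ≤ 1/2 and χ(s) = 0 for |s| ≥ 1. For x, x₁ ∈ ℝ² set p = |x−x₁|, r = |x|+1, and G(λ,x,x₁) = χ(λp)J₀(λp) − χ(λr)J₀(λr). Then there is a constant C (depending only on χ) such that for all λ > 0 and all x, x₁ ∈ ℝ²: |G(λ,x,x₁)| ≤ C λ^{1/2} ⟨x₁⟩^{1/2}, |∂_λ G(λ,x,x₁)| ≤ C λ^{−1/2} ⟨x₁⟩^{1/2}, and |∂_λ² G(λ,x,x₁)| ≤ C λ^{−1} ⟨x₁⟩. -/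

import Mathlib

open MeasureTheory Real Set

noncomputable section

/-- The plane `ℝ²`. -/
abbrev Plane : Type := EuclideanSpace ℝ (Fin 2)

/-- The Bessel function of the first kind of order zero,
`J₀(z) = (1/π) ∫₀^π cos(z sin θ) dθ`. -/
def J0 (z : ℝ) : ℝ := (1 / Real.pi) * ∫ θ in (0:ℝ)..Real.pi, Real.cos (z * Real.sin θ)

/-- The Japanese bracket `⟨x⟩ = (1+|x|²)^{1/2}`. -/
def jap (x : Plane) : ℝ := (1 + ‖x‖ ^ 2) ^ ((1:ℝ)/2)

def Fb (n : ℕ) (z : ℝ) : ℝ :=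
  ∫ θ in (0:ℝ)..Real.pi, (Real.sin θ)^n * Real.cos (z * Real.sin θ + n * (Real.pi/2))

lemma hasDerivAt_Fb (n : ℕ) (z : ℝ) : HasDerivAt (Fb n) (Fb (n+1) z) z := by
  have h := intervalIntegral.hasDerivAt_integral_of_dominated_loc_of_deriv_le
    (F := fun z θ => (Real.sin θ)^n * Real.cos (z * Real.sin θ + n * (Real.pi/2)))
    (F' := fun z θ => (Real.sin θ)^(n+1) * Real.cos (z * Real.sin θ + (n+1) * (Real.pi/2)))
    (x₀ := z) (bound := fun _ => 1) (a := 0) (b := Real.pi) (μ := volume)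
    (Metric.ball_mem_nhds z one_pos)
    (Filter.Eventually.of_forall fun x => Continuous.aestronglyMeasurable (by fun_prop))
    (Continuous.intervalIntegrable (by fun_prop) _ _)
    (Continuous.aestronglyMeasurable (by fun_prop))
    (Filter.Eventually.of_forall fun t _ x _ => by
      calc ‖(Real.sin t)^(n+1) * Real.cos (x * Real.sin t + (n+1) * (Real.pi/2))‖
          ≤ 1 * 1 := by
            rw [norm_mul]
            gcongr
            · simp only [norm_pow, Real.norm_eq_abs]
              exact pow_le_one₀ (abs_nonneg _) (abs_sin_le_one t)
            · exact abs_cos_le_one _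
        _ = 1 := one_mul 1)
    (Continuous.intervalIntegrable continuous_const _ _)
    (Filter.Eventually.of_forall fun t _ x _ => by
      have h1 : HasDerivAt (fun x : ℝ => x * Real.sin t + n * (Real.pi/2)) (Real.sin t) x := by
        simpa using ((hasDerivAt_id x).mul_const (Real.sin t)).add_const (n * (Real.pi/2))
      have h2 := (Real.hasDerivAt_cos (x * Real.sin t + n * (Real.pi/2))).comp x h1
      have h3 := h2.const_mul ((Real.sin t)^n)
      refine h3.congr_deriv ?_
      symm
      have e1 : x * Real.sin t + ((n:ℝ)+1) * (Real.pi/2) =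
            (x * Real.sin t + n * (Real.pi/2)) + Real.pi/2 := by ring
      show Real.sin t ^ (n+1) * Real.cos (x * Real.sin t + ((n:ℝ)+1) * (Real.pi/2)) = _
      rw [e1, Real.cos_add_pi_div_two]
      ring)
  have h2 := h.2
  simp only [Fb, Nat.cast_add, Nat.cast_one]
  exact h2

lemma contDiff_Fb (m : ℕ) (n : ℕ) : ContDiff ℝ m (Fb n) := by
  induction m generalizing n with
  | zero =>
    rw [Nat.cast_zero, contDiff_zero]
    have hd : Differentiable ℝ (Fb n) := fun z => (hasDerivAt_Fb n z).differentiableAt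
    exact hd.continuous
  | succ k ih =>
    rw [Nat.cast_succ, contDiff_succ_iff_deriv]
    have : deriv (Fb n) = Fb (n+1) := funext fun z => (hasDerivAt_Fb n z).deriv
    rw [this]
    exact ⟨fun z => (hasDerivAt_Fb n z).differentiableAt, fun h => by simp at h, ih (n+1)⟩

lemma J0_eq : J0 = fun z => (1 / Real.pi) * Fb 0 z := by
  funext z
  simp [J0, Fb]

lemma contDiff_J0 (m : ℕ) : ContDiff ℝ m J0 := by
  rw [J0_eq]
  exact contDiff_const.mul (contDiff_Fb m 0)

lemma deriv_contDiff' {f : ℝ → ℝ} {m : ℕ} (h : ContDiff ℝ ((m+1 : ℕ)) f) :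
    ContDiff ℝ m (deriv f) := by
  rw [Nat.cast_succ, contDiff_succ_iff_deriv] at h
  exact h.2.2

/-- mean value bound -/
lemma lip_of_deriv_bound {f : ℝ → ℝ} (hf : Differentiable ℝ f) {K : ℝ}
    (hK : ∀ t, |deriv f t| ≤ K) (a b : ℝ) : |f a - f b| ≤ K * |a - b| := by
  have := Convex.norm_image_sub_le_of_norm_deriv_le (f := f) (s := Set.univ)
    (fun x _ => hf x) (fun x _ => hK x) convex_univ (Set.mem_univ b) (Set.mem_univ a)
  simpa [Real.norm_eq_abs] using this

lemma geo_mean {D A B : ℝ} (hD : 0 ≤ D) (hA : 0 ≤ A) (h1 : D ≤ A) (h2 : D ≤ B) :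
    D ≤ Real.sqrt (A * B) := by
  calc D = Real.sqrt (D * D) := (Real.sqrt_mul_self hD).symm
    _ ≤ Real.sqrt (A * B) := Real.sqrt_le_sqrt (mul_le_mul h1 h2 hD hA)

/-- Bounds for `G(λ,x,x₁) = χ(λp)J₀(λp) − χ(λr)J₀(λr)` with `p = |x−x₁|`
and `r = |x|+1`: `|G| ≲ λ^{1/2}⟨x₁⟩^{1/2}`, `|∂_λG| ≲ λ^{-1/2}⟨x₁⟩^{1/2}`,
`|∂_λ²G| ≲ λ^{-1}⟨x₁⟩`. -/
theorem G_difference_bounds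
    (χ : ℝ → ℝ) (hχ : ContDiff ℝ (⊤ : ℕ∞) χ)
    (hχ1 : ∀ s : ℝ, |s| ≤ 1 / 2 → χ s = 1)
    (hχ0 : ∀ s : ℝ, 1 ≤ |s| → χ s = 0) :
    ∃ C : ℝ, 0 < C ∧ ∀ l : ℝ, 0 < l → ∀ x x₁ : Plane,
      |χ (l * ‖x - x₁‖) * J0 (l * ‖x - x₁‖) -
          χ (l * (‖x‖ + 1)) * J0 (l * (‖x‖ + 1))| ≤ C * l ^ ((1:ℝ)/2) * jap x₁ ^ ((1:ℝ)/2) ∧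
      |deriv (fun s : ℝ => χ (s * ‖x - x₁‖) * J0 (s * ‖x - x₁‖) -
          χ (s * (‖x‖ + 1)) * J0 (s * (‖x‖ + 1))) l| ≤
        C * l ^ (-(1:ℝ)/2) * jap x₁ ^ ((1:ℝ)/2) ∧
      |iteratedDeriv 2 (fun s : ℝ => χ (s * ‖x - x₁‖) * J0 (s * ‖x - x₁‖) -
          χ (s * (‖x‖ + 1)) * J0 (s * (‖x‖ + 1))) l| ≤
        C * l⁻¹ * jap x₁ := by
  classical
  set f : ℝ → ℝ := fun t => χ t * J0 t with hf_def
  have hf3 : ContDiff ℝ (3:ℕ) f := (hχ.of_le (by exact WithTop.coe_le_coe.mpr le_top)).mul (contDiff_J0 3)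
  have hfc : HasCompactSupport f := by
    apply HasCompactSupport.intro (isCompact_Icc (a := (-1:ℝ)) (b := 1))
    intro t ht
    have h1 : 1 ≤ |t| := by
      rw [mem_Icc, ← abs_le, not_le] at ht
      exact ht.le
    simp [hf_def, hχ0 t h1]
  set f1 : ℝ → ℝ := deriv f with hf1_def
  set f2 : ℝ → ℝ := deriv f1 with hf2_def
  have hf1 : ContDiff ℝ (2:ℕ) f1 := deriv_contDiff' hf3
  have hf2 : ContDiff ℝ (1:ℕ) f2 := deriv_contDiff' hf1
  have hf1c : HasCompactSupport f1 := hfc.deriv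
  have hf2c : HasCompactSupport f2 := hf1c.deriv
  have hfd : Differentiable ℝ f := hf3.differentiable (by norm_num)
  have hf1d : Differentiable ℝ f1 := hf1.differentiable (by norm_num)
  have hf2d : Differentiable ℝ f2 := hf2.differentiable (by norm_num)
  -- auxiliary functions
  set g : ℝ → ℝ := fun t => t * f1 t with hg_def
  set hh : ℝ → ℝ := fun t => t^2 * f2 t with hh_def
  have hgc : HasCompactSupport g := hf1c.mul_left
  have hhc : HasCompactSupport hh := hf2c.mul_left
  have hg1 : ContDiff ℝ (1:ℕ) g := contDiff_id.mul (hf1.of_le (by norm_num))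
  have hh1 : ContDiff ℝ (1:ℕ) hh := (contDiff_id.pow 2).mul hf2
  have hgd : Differentiable ℝ g := hg1.differentiable (by norm_num)
  have hhd : Differentiable ℝ hh := hh1.differentiable (by norm_num)
  have hgdc : HasCompactSupport (deriv g) := hgc.deriv
  have hhdc : HasCompactSupport (deriv hh) := hhc.deriv
  -- bounds
  obtain ⟨Kf, hKf⟩ := hfc.exists_bound_of_continuous hf3.continuous
  obtain ⟨Kf1, hKf1⟩ := hf1c.exists_bound_of_continuous hf1.continuous
  obtain ⟨Kg, hKg⟩ := hgc.exists_bound_of_continuous hg1.continuous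
  obtain ⟨Kg1, hKg1⟩ := hgdc.exists_bound_of_continuous
    ((deriv_contDiff' (m := 0) hg1).continuous)
  obtain ⟨Kh1, hKh1⟩ := hhdc.exists_bound_of_continuous
    ((deriv_contDiff' (m := 0) hh1).continuous)
  simp only [Real.norm_eq_abs] at hKf hKf1 hKg hKg1 hKh1
  have hKf0 : 0 ≤ Kf := le_trans (abs_nonneg _) (hKf 0)
  have hKf10 : 0 ≤ Kf1 := le_trans (abs_nonneg _) (hKf1 0)
  have hKg0 : 0 ≤ Kg := le_trans (abs_nonneg _) (hKg 0)
  have hKg10 : 0 ≤ Kg1 := le_trans (abs_nonneg _) (hKg1 0)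
  have hKh10 : 0 ≤ Kh1 := le_trans (abs_nonneg _) (hKh1 0)
  set C : ℝ := Real.sqrt (2*Kf*(2*Kf1)) + Real.sqrt (2*Kg*(2*Kg1)) + 2*Kh1 + 1 with hC_def
  have hC0 : 0 < C := by positivity
  refine ⟨C, hC0, fun l hl x x₁ => ?_⟩
  set p : ℝ := ‖x - x₁‖ with hp_def
  set r : ℝ := ‖x‖ + 1 with hr_def
  set J : ℝ := jap x₁ with hJ_def
  have hJ1 : 1 ≤ J := by
    rw [hJ_def, jap]
    calc (1:ℝ) = 1 ^ ((1:ℝ)/2) := (Real.one_rpow _).symm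
      _ ≤ (1 + ‖x₁‖^2) ^ ((1:ℝ)/2) := by
          apply Real.rpow_le_rpow zero_le_one (by nlinarith [sq_nonneg ‖x₁‖]) (by norm_num)
  have hJ0 : 0 < J := lt_of_lt_of_le one_pos hJ1
  have hJn : ‖x₁‖ ≤ J := by
    rw [hJ_def, jap, ← Real.sqrt_eq_rpow]
    calc ‖x₁‖ = Real.sqrt (‖x₁‖^2) := by rw [Real.sqrt_sq (norm_nonneg _)]
      _ ≤ Real.sqrt (1 + ‖x₁‖^2) := Real.sqrt_le_sqrt (by linarith)
  have hpr : |p - r| ≤ 2 * J := by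
    have h1 : |p - ‖x‖| ≤ ‖x₁‖ := by
      have := abs_norm_sub_norm_le (x - x₁) x
      simpa [hp_def] using this
    calc |p - r| = |(p - ‖x‖) + (-1)| := by rw [hr_def]; ring_nf
      _ ≤ |p - ‖x‖| + |(-1:ℝ)| := abs_add_le _ _
      _ ≤ ‖x₁‖ + 1 := by simp; linarith
      _ ≤ 2 * J := by linarith
  -- the functions under consideration coincide with s ↦ f (s*p) - f (s*r)
  have hGdef : (fun s : ℝ => χ (s * p) * J0 (s * p) - χ (s * r) * J0 (s * r)) =
      fun s => f (s*p) - f (s*r) := rfl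
  -- derivative facts
  have hda : ∀ (a s : ℝ), HasDerivAt (fun u : ℝ => f (u*a)) (f1 (s*a) * a) s := by
    intro a s
    exact ((hfd (s*a)).hasDerivAt.comp s (hasDerivAt_mul_const a))
  have hda1 : ∀ (a s : ℝ), HasDerivAt (fun u : ℝ => f1 (u*a) * a) (f2 (s*a) * a * a) s := by
    intro a s
    have := ((hf1d (s*a)).hasDerivAt.comp s (hasDerivAt_mul_const a)).mul_const a
    simpa using this
  have hG' : ∀ s : ℝ, HasDerivAt (fun u : ℝ => f (u*p) - f (u*r))
      (f1 (s*p) * p - f1 (s*r) * r) s := fun s => (hda p s).sub (hda r s)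
  have hderivG : deriv (fun u : ℝ => f (u*p) - f (u*r)) =
      fun s => f1 (s*p) * p - f1 (s*r) * r := funext fun s => (hG' s).deriv
  have hderiv2G : iteratedDeriv 2 (fun u : ℝ => f (u*p) - f (u*r)) l =
      f2 (l*p) * p * p - f2 (l*r) * r * r := by
    rw [show (2:ℕ) = 1 + 1 from rfl, iteratedDeriv_succ, iteratedDeriv_one, hderivG]
    exact (((hda1 p l).sub (hda1 r l)).deriv)
  have hp0 : 0 ≤ p := norm_nonneg _
  have hr0 : 0 ≤ r := by rw [hr_def]; positivity
  -- Lipschitz estimates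
  have Lf := lip_of_deriv_bound hfd hKf1
  have Lg := lip_of_deriv_bound hgd hKg1
  have Lh := lip_of_deriv_bound hhd hKh1
  have hlpr : |l*p - l*r| = l * |p - r| := by
    rw [← mul_sub, abs_mul, abs_of_pos hl]
  refine ⟨?_, ?_, ?_⟩
  · -- first bound
    show |f (l*p) - f (l*r)| ≤ C * l ^ ((1:ℝ)/2) * J ^ ((1:ℝ)/2)
    have hB : |f (l*p) - f (l*r)| ≤ 2*Kf1 * (l * J) := by
      calc |f (l*p) - f (l*r)| ≤ Kf1 * |l*p - l*r| := Lf _ _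
        _ = Kf1 * (l * |p - r|) := by rw [hlpr]
        _ ≤ Kf1 * (l * (2*J)) := by
            apply mul_le_mul_of_nonneg_left _ hKf10
            exact mul_le_mul_of_nonneg_left hpr hl.le
        _ = 2*Kf1 * (l * J) := by ring
    have hA : |f (l*p) - f (l*r)| ≤ 2*Kf := by
      calc |f (l*p) - f (l*r)| ≤ |f (l*p)| + |f (l*r)| := abs_sub _ _
        _ ≤ Kf + Kf := add_le_add (hKf _) (hKf _)
        _ = 2*Kf := by ring
    have := geo_mean (abs_nonneg _) (by linarith) hA hB
    calc |f (l*p) - f (l*r)| ≤ Real.sqrt (2*Kf * (2*Kf1 * (l*J))) := this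
      _ = Real.sqrt (2*Kf*(2*Kf1)) * Real.sqrt (l*J) := by
          rw [← Real.sqrt_mul (by positivity)]; ring_nf
      _ = Real.sqrt (2*Kf*(2*Kf1)) * (Real.sqrt l * Real.sqrt J) := by
          rw [Real.sqrt_mul hl.le]
      _ ≤ C * (Real.sqrt l * Real.sqrt J) := by
          apply mul_le_mul_of_nonneg_right _ (by positivity)
          rw [hC_def]
          have : (0:ℝ) ≤ Real.sqrt (2*Kg*(2*Kg1)) := Real.sqrt_nonneg _
          linarith
      _ = C * l ^ ((1:ℝ)/2) * J ^ ((1:ℝ)/2) := by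
          rw [Real.sqrt_eq_rpow, Real.sqrt_eq_rpow]; ring
  · -- second bound
    have h2 : deriv (fun s : ℝ => χ (s * p) * J0 (s * p) - χ (s * r) * J0 (s * r)) l
        = f1 (l*p) * p - f1 (l*r) * r := (hG' l).deriv
    rw [h2]
    have key : f1 (l*p) * p - f1 (l*r) * r = (g (l*p) - g (l*r)) / l := by
      show f1 (l*p) * p - f1 (l*r) * r = ((l*p) * f1 (l*p) - (l*r) * f1 (l*r)) / l
      field_simp
    have habs : |f1 (l*p) * p - f1 (l*r) * r| = |g (l*p) - g (l*r)| / l := by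
      rw [key, abs_div, abs_of_pos hl]
    have hA : |f1 (l*p) * p - f1 (l*r) * r| ≤ 2*Kg / l := by
      rw [habs]
      gcongr
      calc |g (l*p) - g (l*r)| ≤ |g (l*p)| + |g (l*r)| := abs_sub _ _
        _ ≤ Kg + Kg := add_le_add (hKg _) (hKg _)
        _ = 2*Kg := by ring
    have hB : |f1 (l*p) * p - f1 (l*r) * r| ≤ 2*Kg1 * J := by
      rw [habs]
      calc |g (l*p) - g (l*r)| / l ≤ (Kg1 * (l * (2*J))) / l := by
            gcongr
            calc |g (l*p) - g (l*r)| ≤ Kg1 * |l*p - l*r| := Lg _ _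
              _ = Kg1 * (l * |p - r|) := by rw [hlpr]
              _ ≤ Kg1 * (l * (2*J)) := by
                  apply mul_le_mul_of_nonneg_left _ hKg10
                  exact mul_le_mul_of_nonneg_left hpr hl.le
        _ = 2*Kg1 * J * (l / l) := by ring
        _ = 2*Kg1 * J := by rw [div_self hl.ne']; ring
    have hgeo := geo_mean (abs_nonneg _) (div_nonneg (by linarith) hl.le) hA hB
    have hrw : l ^ (-(1:ℝ)/2) = (Real.sqrt l)⁻¹ := by
      rw [neg_div, Real.rpow_neg hl.le, Real.sqrt_eq_rpow]
    calc |f1 (l*p) * p - f1 (l*r) * r| ≤ Real.sqrt (2*Kg / l * (2*Kg1 * J)) := hgeo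
      _ = Real.sqrt ((2*Kg*(2*Kg1)) * (J / l)) := by ring_nf
      _ = Real.sqrt (2*Kg*(2*Kg1)) * Real.sqrt (J / l) := Real.sqrt_mul (by positivity) _
      _ = Real.sqrt (2*Kg*(2*Kg1)) * (Real.sqrt J / Real.sqrt l) := by
          rw [Real.sqrt_div hJ0.le]
      _ ≤ C * (Real.sqrt J / Real.sqrt l) := by
          apply mul_le_mul_of_nonneg_right _ (by positivity)
          rw [hC_def]
          have : (0:ℝ) ≤ Real.sqrt (2*Kf*(2*Kf1)) := Real.sqrt_nonneg _
          linarith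
      _ = C * l ^ (-(1:ℝ)/2) * J ^ ((1:ℝ)/2) := by
          rw [hrw, Real.sqrt_eq_rpow]; ring
  · -- third bound
    have h3 : iteratedDeriv 2 (fun s : ℝ => χ (s * p) * J0 (s * p) - χ (s * r) * J0 (s * r)) l
        = f2 (l*p) * p * p - f2 (l*r) * r * r := hderiv2G
    rw [h3]
    have key : f2 (l*p) * p * p - f2 (l*r) * r * r = (hh (l*p) - hh (l*r)) / l^2 := by
      show _ = ((l*p)^2 * f2 (l*p) - (l*r)^2 * f2 (l*r)) / l^2
      field_simp
    have habs : |f2 (l*p) * p * p - f2 (l*r) * r * r| = |hh (l*p) - hh (l*r)| / l^2 := by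
      rw [key, abs_div, abs_of_pos (pow_pos hl 2)]
    rw [habs]
    calc |hh (l*p) - hh (l*r)| / l^2 ≤ (Kh1 * (l * (2*J))) / l^2 := by
          gcongr
          calc |hh (l*p) - hh (l*r)| ≤ Kh1 * |l*p - l*r| := Lh _ _
            _ = Kh1 * (l * |p - r|) := by rw [hlpr]
            _ ≤ Kh1 * (l * (2*J)) := by
                apply mul_le_mul_of_nonneg_left _ hKh10
                exact mul_le_mul_of_nonneg_left hpr hl.le
      _ = 2*Kh1 * l⁻¹ * J := by
          have hl' : l ≠ 0 := hl.ne'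
          field_simp
      _ ≤ C * l⁻¹ * J := by
          have hC' : 2*Kh1 ≤ C := by
            rw [hC_def]
            have h1 : (0:ℝ) ≤ Real.sqrt (2*Kf*(2*Kf1)) := Real.sqrt_nonneg _
            have h2 : (0:ℝ) ≤ Real.sqrt (2*Kg*(2*Kg1)) := Real.sqrt_nonneg _
            linarith
          have : (0:ℝ) ≤ l⁻¹ * J := by positivity
          nlinarith [mul_le_mul_of_nonneg_right hC' this]
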